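/- arXiv:1011.0766 — 3 statements merged into one kernel-verified Lean document; each statement's English description precedes it below -/
import Mathlib

section
/- Let Q be a dyadic cube in ℝ^d and let E be a measurable subset of Q with 0 < λ(E) < λ(Q). Then there exists a dyadic cube W contained in Q such that min{λ(W \ E), λ(W ∩ E)} ≥ 2^{−d}·(1 − 2^{−d})·λ(W). -/
open MeasureTheory Set

/-- A dyadic cube in `ℝ^d`: `∏_i [kᵢ·2^{−n}, (kᵢ+1)·2^{−n}]` with `n ∈ ℤ`, `kᵢ ∈ ℤ`. -/
def IsDyadicCube {d : ℕ} (Q : Set (Fin d → ℝ)) : Prop :=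
  ∃ (n : ℤ) (k : Fin d → ℤ),
    Q = Set.univ.pi fun i =>
      Set.Icc ((k i : ℝ) * (2:ℝ) ^ (-n)) (((k i : ℝ) + 1) * (2:ℝ) ^ (-n))

/-
Let `c = 2^{-d} (1 - 2^{-d})`. If both `E` and `Q \ E` fill at least the proportion `c` of `Q`,
then `Q` itself works. Otherwise, replacing `E` by its complement if necessary,
`|Q ∩ E| < c |Q|`. Take a density point `x ∈ Q` of `E` and the nested dyadic cubes
`Q = P₀ ⊃ P₁ ⊃ ⋯` containing `x`; these are sup-norm balls of radius comparable to their distance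
from `x`, so the proportion of `E` in `P_j` tends to `1`. At the first `j` with
`|P_j ∩ E| ≥ c |P_j|` we have `|P_j ∩ E| ≤ |P_{j-1} ∩ E| < c 2^d |P_j| = (1 - 2^{-d}) |P_j|`,
hence `|P_j \ E| ≥ 2^{-d} |P_j| ≥ c |P_j|`.
-/

open Metric Filter Topology
open scoped ENNReal

section Balanced

variable {α : Type*} [MeasurableSpace α] {μ : Measure α} {E : Set α} {S : ℝ≥0∞}

lemma ENNReal.ofReal_mul_one_sub {s : ℝ} (hs : 0 ≤ s) :
    ENNReal.ofReal (s * (1 - s)) = ENNReal.ofReal s * (1 - ENNReal.ofReal s) := by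
  rw [ENNReal.ofReal_mul hs, ENNReal.ofReal_sub _ hs, ENNReal.ofReal_one]

lemma mul_le_measure_diff_of_measure_inter_le (hE : MeasurableSet E) {P : Set α}
    (hP : μ P ≠ ⊤) (hS : S ≤ 1) (h : μ (P ∩ E) ≤ (1 - S) * μ P) :
    S * μ P ≤ μ (P \ E) := by
  have hsplit : S * μ P + (1 - S) * μ P = μ P := by
    rw [← add_mul, add_tsub_cancel_of_le hS, one_mul]
  rw [ENNReal.eq_sub_of_add_eq (ENNReal.mul_ne_top (by simp) hP) hsplit,
    tsub_le_iff_left]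
  calc μ P = μ (P ∩ E) + μ (P \ E) := (measure_inter_add_sdiff P hE).symm
    _ ≤ (1 - S) * μ P + μ (P \ E) := by gcongr

/-- Take the first `j` with `S (1 - S) μ (P j) ≤ μ (P j ∩ E)`. Then `j ≠ 0`, and since
`P j ⊆ P (j - 1)`, `μ (P j ∩ E) < S (1 - S) μ (P (j - 1)) = (1 - S) μ (P j)`. -/
lemma exists_balanced_of_antitone (hE : MeasurableSet E) (hS : S ≤ 1) {P : ℕ → Set α}
    (hP : Antitone P) (hvol : ∀ j, μ (P (j + 1)) = S * μ (P j)) (hfin : μ (P 0) ≠ ⊤)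
    (h₀ : μ (P 0 ∩ E) < S * (1 - S) * μ (P 0))
    (hreach : ∃ j, S * (1 - S) * μ (P j) ≤ μ (P j ∩ E)) :
    ∃ j, S * (1 - S) * μ (P j) ≤ min (μ (P j \ E)) (μ (P j ∩ E)) := by
  classical
  obtain ⟨i, hi⟩ : ∃ i, Nat.find hreach = i + 1 :=
    Nat.exists_eq_succ_of_ne_zero fun h => (Nat.find_spec hreach).not_gt (h ▸ h₀)
  have hbefore : μ (P i ∩ E) < S * (1 - S) * μ (P i) :=
    not_le.1 (Nat.find_min hreach (hi ▸ Nat.lt_succ_self i))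
  have hafter : μ (P (i + 1) ∩ E) ≤ (1 - S) * μ (P (i + 1)) :=
    calc μ (P (i + 1) ∩ E) ≤ μ (P i ∩ E) := by gcongr; exact hP i.le_succ
      _ ≤ S * (1 - S) * μ (P i) := hbefore.le
      _ = (1 - S) * μ (P (i + 1)) := by rw [hvol, mul_comm S, mul_assoc]
  refine ⟨i + 1, le_min ?_ (hi ▸ Nat.find_spec hreach)⟩
  calc S * (1 - S) * μ (P (i + 1)) ≤ S * μ (P (i + 1)) := by
        gcongr; exact mul_le_of_le_one_right' tsub_le_self
    _ ≤ μ (P (i + 1) \ E) :=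
      mul_le_measure_diff_of_measure_inter_le hE (ne_top_of_le_ne_top hfin
        (measure_mono (hP (Nat.zero_le _)))) hS hafter

end Balanced

namespace DyadicCube

variable {d : ℕ}

def dyadicCube (n : ℤ) (k : Fin d → ℤ) : Set (Fin d → ℝ) :=
  univ.pi fun i => Icc ((k i : ℝ) * (2:ℝ) ^ (-n)) (((k i : ℝ) + 1) * (2:ℝ) ^ (-n))

lemma isDyadicCube_dyadicCube (n : ℤ) (k : Fin d → ℤ) : IsDyadicCube (dyadicCube n k) :=
  ⟨n, k, rfl⟩

lemma mem_dyadicCube {x : Fin d → ℝ} {n : ℤ} {k : Fin d → ℤ} :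
    x ∈ dyadicCube n k ↔ ∀ i, (k i : ℝ) ≤ x i * 2 ^ n ∧ x i * 2 ^ n ≤ k i + 1 := by
  have h : (0 : ℝ) < 2 ^ n := by positivity
  simp only [dyadicCube, mem_univ_pi, mem_Icc, zpow_neg, ← div_eq_mul_inv, div_le_iff₀ h,
    le_div_iff₀ h]

lemma dyadicCube_eq_closedBall (n : ℤ) (k : Fin d → ℤ) :
    dyadicCube n k = closedBall (fun i => (k i + 2⁻¹ : ℝ) * 2 ^ (-n)) (2 ^ (-n) / 2) := by
  rw [closedBall_pi _ (by positivity), dyadicCube]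
  congr! 2 with i
  rw [Real.closedBall_eq_Icc]
  congr 1 <;> ring

lemma volume_dyadicCube (n : ℤ) (k : Fin d → ℤ) :
    volume (dyadicCube n k) = ENNReal.ofReal (2 ^ (-n)) ^ d := by
  simp only [dyadicCube, volume_pi_pi, Real.volume_Icc, add_mul, one_mul, add_sub_cancel_left,
    Finset.prod_const, Finset.card_univ, Fintype.card_fin]

lemma volume_dyadicCube_succ (n : ℤ) (k k' : Fin d → ℤ) :
    volume (dyadicCube (n + 1) k') =
      ENNReal.ofReal (2 ^ (-(d : ℤ))) * volume (dyadicCube n k) := by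
  rw [volume_dyadicCube, volume_dyadicCube, ← ENNReal.ofReal_pow (by positivity),
    ← ENNReal.ofReal_pow (by positivity), ← ENNReal.ofReal_mul (by positivity), ← zpow_natCast,
    ← zpow_natCast, ← zpow_mul, ← zpow_mul, ← zpow_add₀ two_ne_zero]
  ring_nf

/-- The child of `dyadicCube n k` containing `x`, when `x` lies in that cube. -/
noncomputable def childIndex (x : Fin d → ℝ) (n : ℤ) (k : Fin d → ℤ) : Fin d → ℤ :=
  fun i => if x i * 2 ^ (n + 1) ≤ 2 * k i + 1 then 2 * k i else 2 * k i + 1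

lemma mem_dyadicCube_childIndex {x : Fin d → ℝ} {n : ℤ} {k : Fin d → ℤ}
    (hx : x ∈ dyadicCube n k) : x ∈ dyadicCube (n + 1) (childIndex x n k) := by
  rw [mem_dyadicCube] at hx ⊢
  intro i
  obtain ⟨h₁, h₂⟩ := hx i
  simp only [childIndex, zpow_add_one₀ (two_ne_zero (α := ℝ))]
  split_ifs with h <;> push_cast <;> constructor <;> linarith

lemma dyadicCube_childIndex_subset (x : Fin d → ℝ) (n : ℤ) (k : Fin d → ℤ) :
    dyadicCube (n + 1) (childIndex x n k) ⊆ dyadicCube n k := by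
  intro y hy
  rw [mem_dyadicCube] at hy ⊢
  intro i
  obtain ⟨h₁, h₂⟩ := hy i
  rw [zpow_add_one₀ (two_ne_zero (α := ℝ))] at h₁ h₂
  unfold childIndex at h₁ h₂
  split_ifs at h₁ h₂ <;> push_cast at h₁ h₂ <;> constructor <;> linarith

noncomputable def chainIndex (x : Fin d → ℝ) (n : ℤ) (k : Fin d → ℤ) : ℕ → Fin d → ℤ
  | 0 => k
  | j + 1 => childIndex x (n + j) (chainIndex x n k j)

noncomputable def dyadicChain (x : Fin d → ℝ) (n : ℤ) (k : Fin d → ℤ) (j : ℕ) :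
    Set (Fin d → ℝ) :=
  dyadicCube (n + j) (chainIndex x n k j)

variable {x : Fin d → ℝ} {n : ℤ} {k : Fin d → ℤ}

lemma dyadicChain_zero : dyadicChain x n k 0 = dyadicCube n k := by
  simp [dyadicChain, chainIndex]

lemma dyadicChain_succ (j : ℕ) :
    dyadicChain x n k (j + 1) =
      dyadicCube (n + j + 1) (childIndex x (n + j) (chainIndex x n k j)) := by
  simp [dyadicChain, chainIndex, add_assoc]

lemma antitone_dyadicChain : Antitone (dyadicChain x n k) :=
  antitone_nat_of_succ_le fun j => by
    rw [dyadicChain_succ]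
    exact dyadicCube_childIndex_subset _ _ _

lemma mem_dyadicChain (hx : x ∈ dyadicCube n k) (j : ℕ) : x ∈ dyadicChain x n k j := by
  induction j with
  | zero => rwa [dyadicChain_zero]
  | succ j ih => rw [dyadicChain_succ]; exact mem_dyadicCube_childIndex ih

lemma volume_dyadicChain_succ (j : ℕ) :
    volume (dyadicChain x n k (j + 1)) =
      ENNReal.ofReal (2 ^ (-(d : ℤ))) * volume (dyadicChain x n k j) := by
  rw [dyadicChain_succ, volume_dyadicCube_succ]
  rfl

lemma tendsto_dyadicChain_radius (n : ℤ) :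
    Tendsto (fun j : ℕ => (2 : ℝ) ^ (-(n + j)) / 2) atTop (𝓝[>] 0) := by
  have h : (fun j : ℕ => (2 : ℝ) ^ (-(n + j)) / 2) = fun j => 2 ^ (-n) / 2 * 2⁻¹ ^ j := by
    ext j
    rw [neg_add, zpow_add₀ (two_ne_zero (α := ℝ)), zpow_neg _ (j : ℤ), zpow_natCast, inv_pow]
    ring
  refine tendsto_nhdsWithin_of_tendsto_nhds_of_eventually_within _ ?_
    (Eventually.of_forall fun j => mem_Ioi.2 (by positivity))
  rw [h, ← mul_zero (2 ^ (-n) / 2 : ℝ)]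
  exact (tendsto_pow_atTop_nhds_zero_of_lt_one (by norm_num) (by norm_num)).const_mul _

lemma ae_tendsto_volume_inter_dyadicChain_div (E : Set (Fin d → ℝ)) :
    ∀ᵐ x ∂volume.restrict E, ∀ n k, x ∈ dyadicCube n k →
      Tendsto (fun j => volume (E ∩ dyadicChain x n k j) / volume (dyadicChain x n k j))
        atTop (𝓝 1) := by
  filter_upwards [IsUnifLocDoublingMeasure.ae_tendsto_measure_inter_div volume E 1]
    with x hx n k hxQ
  have hmem : ∀ᶠ j in atTop, x ∈ closedBall (fun i => (chainIndex x n k j i + 2⁻¹ : ℝ) *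
      2 ^ (-(n + j))) (1 * ((2 : ℝ) ^ (-(n + j)) / 2)) :=
    Eventually.of_forall fun j => by
      rw [one_mul, ← dyadicCube_eq_closedBall]
      exact mem_dyadicChain hxQ j
  simpa only [dyadicChain, dyadicCube_eq_closedBall] using
    hx _ _ (tendsto_dyadicChain_radius n) hmem

lemma exists_balanced_subcube_of_lt {Q E : Set (Fin d → ℝ)} (hQ : IsDyadicCube Q)
    (hE : MeasurableSet E) (hpos : 0 < volume (Q ∩ E))
    (hlt : volume (Q ∩ E) <
      ENNReal.ofReal ((2:ℝ) ^ (-(d:ℤ)) * (1 - (2:ℝ) ^ (-(d:ℤ)))) * volume Q) :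
    ∃ W : Set (Fin d → ℝ), IsDyadicCube W ∧ W ⊆ Q ∧
      ENNReal.ofReal ((2:ℝ) ^ (-(d:ℤ)) * (1 - (2:ℝ) ^ (-(d:ℤ)))) * volume W ≤
        min (volume (W \ E)) (volume (W ∩ E)) := by
  obtain ⟨n, k, hQ⟩ := hQ
  replace hQ : Q = dyadicCube n k := hQ
  subst hQ
  have hs₀ : (0 : ℝ) ≤ 2 ^ (-(d:ℤ)) := by positivity
  have hs₁ : (2 : ℝ) ^ (-(d:ℤ)) ≤ 1 := zpow_le_one_of_nonpos₀ one_le_two (by simp)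
  have hc : ENNReal.ofReal ((2:ℝ) ^ (-(d:ℤ)) * (1 - (2:ℝ) ^ (-(d:ℤ)))) < 1 :=
    ENNReal.ofReal_lt_one.2 (by nlinarith)
  rw [ENNReal.ofReal_mul_one_sub hs₀] at hc hlt ⊢
  obtain ⟨x, ⟨hxQ, -⟩, hx⟩ := Measure.exists_mem_of_measure_ne_zero_of_ae hpos.ne'
    (ae_restrict_of_ae_restrict_of_subset inter_subset_right
      (ae_tendsto_volume_inter_dyadicChain_div E))
  have hfin (j : ℕ) : volume (dyadicChain x n k j) ≠ ⊤ := by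
    simp [dyadicChain, volume_dyadicCube]
  have hreach : ∃ j, ENNReal.ofReal (2 ^ (-(d:ℤ))) * (1 - ENNReal.ofReal (2 ^ (-(d:ℤ)))) *
      volume (dyadicChain x n k j) ≤ volume (dyadicChain x n k j ∩ E) := by
    obtain ⟨j, hj⟩ := ((hx n k hxQ).eventually (lt_mem_nhds hc)).exists
    rw [inter_comm, ENNReal.lt_div_iff_mul_lt (Or.inr (hc.trans ENNReal.one_lt_top).ne)
      (Or.inl (hfin j))] at hj
    exact ⟨j, hj.le⟩
  obtain ⟨j, hj⟩ := exists_balanced_of_antitone hE (ENNReal.ofReal_le_one.2 hs₁)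
    antitone_dyadicChain volume_dyadicChain_succ (hfin 0) (by rwa [dyadicChain_zero]) hreach
  exact ⟨dyadicChain x n k j, isDyadicCube_dyadicCube _ _,
    (antitone_dyadicChain j.zero_le).trans_eq dyadicChain_zero, hj⟩

end DyadicCube

theorem stmt17 {d : ℕ} (Q : Set (Fin d → ℝ)) (hQ : IsDyadicCube Q)
    (E : Set (Fin d → ℝ)) (hE : MeasurableSet E) (hEQ : E ⊆ Q)
    (h1 : 0 < volume E) (h2 : volume E < volume Q) :
    ∃ W : Set (Fin d → ℝ), IsDyadicCube W ∧ W ⊆ Q ∧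
      ENNReal.ofReal ((2:ℝ) ^ (-(d:ℤ)) * (1 - (2:ℝ) ^ (-(d:ℤ)))) * volume W ≤
        min (volume (W \ E)) (volume (W ∩ E)) := by
  set c := ENNReal.ofReal ((2:ℝ) ^ (-(d:ℤ)) * (1 - (2:ℝ) ^ (-(d:ℤ))))
  by_cases hsmall : volume (Q ∩ E) < c * volume Q
  · exact DyadicCube.exists_balanced_subcube_of_lt hQ hE (by rwa [inter_eq_right.2 hEQ]) hsmall
  by_cases hlarge : volume (Q \ E) < c * volume Q
  · have hpos : 0 < volume (Q \ E) := by
      rw [measure_sdiff hEQ hE.nullMeasurableSet (ne_top_of_lt h2)]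
      exact tsub_pos_of_lt h2
    rw [sdiff_eq] at hpos hlarge
    obtain ⟨W, hW, hWQ, hWE⟩ := DyadicCube.exists_balanced_subcube_of_lt hQ hE.compl hpos hlarge
    rw [sdiff_compl, ← sdiff_eq, min_comm] at hWE
    exact ⟨W, hW, hWQ, hWE⟩
  · exact ⟨Q, hQ, subset_rfl, le_min (not_lt.1 hlarge) (not_lt.1 hsmall)⟩
end

section
/- Let d be a positive integer, τ ∈ (0,1/2) and s > 0, and write Q = [0,1]^d. Suppose that whenever F₊ and F₋ are disjoint subsets of Q, each a finite union of dyadic cubes contained in Q, satisfying min{λ(F₊), λ(F₋)} > τ·λ(Q \ F₊ \ F₋), there exists a cube W contained in Q with min{λ(W ∩ F₊), λ(W ∩ F₋)} ≥ s·λ(W). Then (τ,s) is a John–Strömberg pair for the collection of all cubes in ℝ^d. -/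
open MeasureTheory Set

/-- A closed axis-parallel cube in `ℝ^d` with positive side length. -/
def IsCube {d : ℕ} (Q : Set (Fin d → ℝ)) : Prop :=
  ∃ (a : Fin d → ℝ) (r : ℝ), 0 < r ∧ Q = Set.univ.pi fun i => Set.Icc (a i) (a i + r)

/-- `F` is a finite union of dyadic cubes contained in `Q`. -/
def FiniteUnionOfDyadicCubesIn {d : ℕ} (F Q : Set (Fin d → ℝ)) : Prop :=
  ∃ 𝒮 : Set (Set (Fin d → ℝ)), 𝒮.Finite ∧ (∀ C ∈ 𝒮, IsDyadicCube C ∧ C ⊆ Q) ∧ F = ⋃₀ 𝒮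

/-- `(τ,s)` is a John–Strömberg pair for the collection `𝓔`. -/
def IsJSPair {X : Type*} [MeasurableSpace X] (μ : Measure X)
    (𝓔 : Set (Set X)) (τ s : ℝ) : Prop :=
  0 < τ ∧ 0 < s ∧
  ∀ Q ∈ 𝓔, ∀ Ep Em G : Set X,
    MeasurableSet Ep → MeasurableSet Em → MeasurableSet G →
    Disjoint Ep Em → Disjoint Ep G → Disjoint Em G →
    Q = Ep ∪ Em ∪ G →
    ENNReal.ofReal τ * μ G < min (μ Ep) (μ Em) →
    ∃ W ∈ 𝓔, W ⊆ Q ∧ ENNReal.ofReal s * μ W ≤ min (μ (W ∩ Ep)) (μ (W ∩ Em))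


/-!
Rescaling reduces the claim to the unit cube. There, inner regularity gives compact cores
`Kp ⊆ Ep` and `Km ⊆ Em` inside the open cube whose masses still beat `τ λ(G)` with room to spare.
Covering them by fine dyadic cubes produces dyadic sets `Fp ⊇ Kp`, `Fm ⊇ Km`, contained in
disjoint neighbourhoods of the cores, to which the hypothesis applies, while
`λ(Fp \ Ep), λ(Fm \ Em) → 0`. Each cube `W` it provides meets both `Fp` and `Fm`, so its side is
bounded below by their distance; a subsequence of these cubes converges to a nondegenerate cube
inside the unit cube, and upper semicontinuity of `λ(W ∩ E)` in `W` carries the density bounds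
over to the limit.
-/

open Filter Topology ENNReal Metric

section JSSet

variable {X : Type*} [MeasurableSpace X]

def IsJSSet (μ : Measure X) (𝓔 : Set (Set X)) (τ s : ℝ) (Q : Set X) : Prop :=
  ∀ Ep Em G : Set X,
    MeasurableSet Ep → MeasurableSet Em → MeasurableSet G →
    Disjoint Ep Em → Disjoint Ep G → Disjoint Em G →
    Q = Ep ∪ Em ∪ G →
    ENNReal.ofReal τ * μ G < min (μ Ep) (μ Em) →
    ∃ W ∈ 𝓔, W ⊆ Q ∧ ENNReal.ofReal s * μ W ≤ min (μ (W ∩ Ep)) (μ (W ∩ Em))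

lemma isJSPair_iff {μ : Measure X} {𝓔 : Set (Set X)} {τ s : ℝ} :
    IsJSPair μ 𝓔 τ s ↔ 0 < τ ∧ 0 < s ∧ ∀ Q ∈ 𝓔, IsJSSet μ 𝓔 τ s Q :=
  Iff.rfl

lemma IsJSSet.image {μ : Measure X} {𝓔 : Set (Set X)} {τ s : ℝ} {Q : Set X}
    (hQ : IsJSSet μ 𝓔 τ s Q) (e : X ≃ᵐ X) {c : ℝ≥0∞} (hc₀ : c ≠ 0) (hc : c ≠ ∞)
    (hμ : ∀ S, μ (e '' S) = c * μ S) (h𝓔 : ∀ W ∈ 𝓔, e '' W ∈ 𝓔) :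
    IsJSSet μ 𝓔 τ s (e '' Q) := by
  intro Ep Em G hEp hEm hG hpm hpG hmG hQ' hlt
  have hpre : ∀ S, μ S = c * μ (e ⁻¹' S) := fun S => by
    rw [← hμ, e.image_preimage]
  have hlt' : ENNReal.ofReal τ * μ (e ⁻¹' G) < min (μ (e ⁻¹' Ep)) (μ (e ⁻¹' Em)) := by
    rw [hpre G, hpre Ep, hpre Em, mul_left_comm, ← mul_min] at hlt
    exact (ENNReal.mul_lt_mul_iff_right hc₀ hc).1 hlt
  obtain ⟨W, hW, hWQ, hWs⟩ := hQ _ _ _ (e.measurable hEp) (e.measurable hEm) (e.measurable hG)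
    (hpm.preimage e) (hpG.preimage e) (hmG.preimage e)
    (by rw [← preimage_union, ← preimage_union, ← hQ', e.preimage_image]) hlt'
  refine ⟨e '' W, h𝓔 W hW, image_mono hWQ, ?_⟩
  rw [← image_inter_preimage, ← image_inter_preimage, hμ, hμ, hμ, mul_left_comm, ← mul_min]
  gcongr

end JSSet

section Cube

variable {d : ℕ}

def cube (a : Fin d → ℝ) (r : ℝ) : Set (Fin d → ℝ) :=
  univ.pi fun i => Icc (a i) (a i + r)

lemma isCube_cube (a : Fin d → ℝ) {r : ℝ} (hr : 0 < r) : IsCube (cube a r) :=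
  ⟨a, r, hr, rfl⟩

lemma cube_zero_one : cube (0 : Fin d → ℝ) 1 = univ.pi fun _ => Icc 0 1 := by
  simp [cube]

lemma volume_cube (a : Fin d → ℝ) (r : ℝ) : volume (cube a r) = ENNReal.ofReal r ^ d := by
  rw [cube, volume_pi_pi]
  simp [Real.volume_Icc]

lemma cube_subset_cube_iff {a b : Fin d → ℝ} {r ρ : ℝ} (hρ : 0 ≤ ρ) :
    cube b ρ ⊆ cube a r ↔ ∀ i, a i ≤ b i ∧ b i + ρ ≤ a i + r := by
  simp only [cube, univ_pi_subset_univ_pi_iff, Icc_eq_empty_iff, le_add_of_nonneg_right hρ,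
    not_true_eq_false, exists_false, or_false]
  exact forall_congr' fun i => Icc_subset_Icc_iff (le_add_of_nonneg_right hρ)

lemma dist_le_of_mem_cube {b x y : Fin d → ℝ} {ρ : ℝ} (hρ : 0 ≤ ρ) (hx : x ∈ cube b ρ)
    (hy : y ∈ cube b ρ) : dist x y ≤ ρ :=
  (dist_pi_le_iff hρ).2 fun i => by
    simpa using Real.dist_le_of_mem_Icc (hx i (mem_univ i)) (hy i (mem_univ i))

lemma image_add_smul_cube (a b : Fin d → ℝ) {r : ℝ} (hr : 0 < r) (ρ : ℝ) :
    (fun x => a + r • x) '' cube b ρ = cube (a + r • b) (r * ρ) := by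
  ext y
  simp only [cube, mem_image, mem_univ_pi, mem_Icc, Pi.add_apply, Pi.smul_apply, smul_eq_mul]
  constructor
  · rintro ⟨x, hx, rfl⟩ i
    simp only [Pi.add_apply, Pi.smul_apply, smul_eq_mul]
    constructor <;> nlinarith [hx i]
  · intro hy
    refine ⟨fun i => (y i - a i) / r, fun i => ?_, funext fun i => ?_⟩
    · rw [le_div_iff₀ hr, div_le_iff₀ hr]
      constructor <;> nlinarith [hy i]
    · simp only [Pi.add_apply, Pi.smul_apply, smul_eq_mul]
      field_simp
      ring

open scoped Pointwise in
lemma volume_image_add_smul (a : Fin d → ℝ) {r : ℝ} (hr : 0 ≤ r) (S : Set (Fin d → ℝ)) :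
    volume ((fun x => a + r • x) '' S) = ENNReal.ofReal (r ^ d) * volume S := by
  have : (fun x => a + r • x) '' S = a +ᵥ r • S := by
    rw [← image_smul, ← image_vadd, image_image]
    rfl
  rw [this, measure_vadd, Measure.addHaar_smul, Module.finrank_fin_fun,
    abs_of_nonneg (pow_nonneg hr d)]

lemma isJSSet_cube_of_cube_zero_one {τ s : ℝ}
    (h : IsJSSet (volume : Measure (Fin d → ℝ)) {C | IsCube C} τ s (cube 0 1))
    (a : Fin d → ℝ) {r : ℝ} (hr : 0 < r) : IsJSSet volume {C | IsCube C} τ s (cube a r) := by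
  let e : (Fin d → ℝ) ≃ᵐ (Fin d → ℝ) :=
    ((Homeomorph.smulOfNeZero r hr.ne').trans (Homeomorph.addLeft a)).toMeasurableEquiv
  have he : ⇑e = fun x => a + r • x := rfl
  have hQ : e '' cube 0 1 = cube a r := by
    rw [he, image_add_smul_cube a 0 hr]
    simp
  rw [← hQ]
  refine h.image e (ENNReal.ofReal_pos.2 (pow_pos hr d)).ne' ENNReal.ofReal_ne_top
    (he ▸ volume_image_add_smul a hr.le) ?_
  rintro _ ⟨b, ρ, hρ, rfl⟩
  change IsCube (e '' cube b ρ)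
  rw [he, image_add_smul_cube a b hr ρ]
  exact isCube_cube _ (mul_pos hr hρ)

end Cube

section Dyadic

variable {d : ℕ}

lemma isDyadicCube_cube (n : ℤ) (k : Fin d → ℤ) :
    IsDyadicCube (cube (fun i => (k i : ℝ) * 2 ^ (-n)) (2 ^ (-n))) :=
  ⟨n, k, by simp only [cube, add_mul, one_mul]⟩

lemma FiniteUnionOfDyadicCubesIn.of_subset {F Q Q' : Set (Fin d → ℝ)}
    (h : FiniteUnionOfDyadicCubesIn F Q) (hF : F ⊆ Q') : FiniteUnionOfDyadicCubesIn F Q' := by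
  obtain ⟨𝒮, hfin, hdy, rfl⟩ := h
  exact ⟨𝒮, hfin, fun C hC => ⟨(hdy C hC).1, (subset_sUnion_of_mem hC).trans hF⟩, rfl⟩

lemma exists_dyadic_cover {K : Set (Fin d → ℝ)} (hK : Bornology.IsBounded K) (n : ℕ) :
    ∃ F, FiniteUnionOfDyadicCubesIn F univ ∧ K ⊆ F ∧ F ⊆ cthickening (2 ^ (-(n : ℤ))) K := by
  set t : ℝ := 2 ^ (-(n : ℤ))
  have ht : 0 < t := by positivity
  set C : (Fin d → ℤ) → Set (Fin d → ℝ) := fun k => cube (fun i => (k i : ℝ) * t) t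
  obtain ⟨R, hR⟩ := hK.subset_closedBall 0
  have hfin : {k | (C k ∩ K).Nonempty}.Finite := by
    refine (Set.Finite.pi fun _ => finite_Icc (⌈-R / t⌉ - 1) ⌊R / t⌋).subset ?_
    rintro k ⟨x, hxC, hxK⟩ i -
    have hxR : |x i| ≤ R :=
      (Real.norm_eq_abs _ ▸ norm_le_pi_norm x i).trans (mem_closedBall_zero_iff.1 (hR hxK))
    have hxi := hxC i (mem_univ i)
    rw [abs_le] at hxR
    constructor
    · rw [sub_le_iff_le_add, Int.ceil_le, div_le_iff₀ ht]
      push_cast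
      linarith [hxi.2]
    · rw [Int.le_floor, le_div_iff₀ ht]
      linarith [hxi.1]
  refine ⟨⋃₀ (C '' {k | (C k ∩ K).Nonempty}), ⟨_, hfin.image C, ?_, rfl⟩, ?_, ?_⟩
  · rintro _ ⟨k, -, rfl⟩
    exact ⟨isDyadicCube_cube n k, subset_univ _⟩
  · intro x hx
    have hxC : x ∈ C fun i => ⌊x i / t⌋ := fun i _ =>
      ⟨(le_div_iff₀ ht).1 (Int.floor_le _),
        by linarith [(div_lt_iff₀ ht).1 (Int.lt_floor_add_one (x i / t))]⟩
    exact ⟨_, ⟨_, ⟨x, hxC, hx⟩, rfl⟩, hxC⟩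
  · rintro x ⟨_, ⟨k, ⟨y, hyC, hyK⟩, rfl⟩, hxC⟩
    exact mem_cthickening_of_dist_le x y t K hyK (dist_le_of_mem_cube ht.le hxC hyC)

lemma exists_dyadic_approx {K : Set (Fin d → ℝ)} (hK : IsCompact K) {δ : ℝ} (hδ : 0 < δ)
    {η : ℝ≥0∞} (hη : 0 < η) :
    ∃ F, FiniteUnionOfDyadicCubesIn F univ ∧ K ⊆ F ∧ F ⊆ cthickening δ K ∧
      volume (F \ K) < η := by
  have hscale : Tendsto (fun n : ℕ => (2 : ℝ) ^ (-(n : ℤ))) atTop (𝓝 0) := by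
    simpa using tendsto_pow_atTop_nhds_zero_of_lt_one (by norm_num : (0 : ℝ) ≤ 2⁻¹)
      (by norm_num)
  have hvol := (tendsto_measure_cthickening_of_isCompact (μ := volume) hK).comp hscale
  have hKfin := hK.measure_lt_top (μ := volume)
  obtain ⟨n, hnδ, hnη⟩ := ((hscale.eventually (gt_mem_nhds hδ)).and
    (hvol.eventually (gt_mem_nhds (ENNReal.lt_add_right hKfin.ne hη.ne')))).exists
  obtain ⟨F, hF, hKF, hFK⟩ := exists_dyadic_cover hK.isBounded n
  refine ⟨F, hF, hKF, hFK.trans (cthickening_mono hnδ.le K), ?_⟩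
  calc volume (F \ K) ≤ volume (cthickening (2 ^ (-(n : ℤ))) K \ K) :=
        measure_mono (sdiff_subset_sdiff_left hFK)
    _ = volume (cthickening (2 ^ (-(n : ℤ))) K) - volume K :=
        measure_sdiff (self_subset_cthickening K) hK.measurableSet.nullMeasurableSet hKfin.ne
    _ < η := ENNReal.sub_lt_of_lt_add (measure_mono (self_subset_cthickening K))
        (by rw [add_comm]; exact hnη)

end Dyadic

lemma ENNReal.exists_pos_mul_add_add_add_lt {c a b : ℝ≥0∞} (hc : c ≠ ∞) (h : c * a < b) :
    ∃ ε : ℝ≥0∞, 0 < ε ∧ ε ≠ ∞ ∧ c * (a + ε + ε) + ε < b := by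
  have h0 : Tendsto (fun ε : ℝ≥0∞ => ε) (𝓝 0) (𝓝 0) := tendsto_id
  have hf : Tendsto (fun ε => c * (a + ε + ε) + ε) (𝓝 0) (𝓝 (c * a)) := by
    simpa using (ENNReal.Tendsto.const_mul ((tendsto_const_nhds (x := a)).add h0 |>.add h0)
      (Or.inr hc)).add h0
  obtain ⟨ε, ⟨hεb, hε1⟩, hε0⟩ := (((hf.eventually (gt_mem_nhds h)).and
    (Iio_mem_nhds one_pos)).filter_mono nhdsWithin_le_nhds
    |>.and (self_mem_nhdsWithin (s := Ioi 0))).exists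
  exact ⟨ε, hε0, (hε1.trans ENNReal.one_lt_top).ne, hεb⟩

section CompactCores

variable {X : Type*} [MeasurableSpace X] [TopologicalSpace X] [OpensMeasurableSpace X] [T2Space X]
  {μ : Measure X} [μ.InnerRegularCompactLTTop]

lemma exists_isCompact_mul_measure_sdiff_lt {Q Ep Em G : Set X} {c : ℝ≥0∞} (hc : c ≠ ∞)
    (hEp : MeasurableSet Ep) (hEm : MeasurableSet Em) (hEp' : μ Ep ≠ ∞) (hEm' : μ Em ≠ ∞)
    (hQ : Q ⊆ Ep ∪ Em ∪ G) (h : c * μ G < min (μ Ep) (μ Em)) :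
    ∃ Kp ⊆ Ep, ∃ Km ⊆ Em, IsCompact Kp ∧ IsCompact Km ∧
      ∀ Fp Fm : Set X, Kp ⊆ Fp → Km ⊆ Fm → c * μ ((Q \ Fp) \ Fm) < min (μ Fp) (μ Fm) := by
  obtain ⟨ε, hε₀, hε, hεG⟩ := ENNReal.exists_pos_mul_add_add_add_lt hc h
  obtain ⟨Kp, hKpEp, hKp, hKpε⟩ := hEp.exists_isCompact_sdiff_lt hEp' hε₀.ne'
  obtain ⟨Km, hKmEm, hKm, hKmε⟩ := hEm.exists_isCompact_sdiff_lt hEm' hε₀.ne'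
  have hcore : ∀ E K, K ⊆ E → μ (E \ K) < ε → c * (μ G + ε + ε) + ε < μ E →
      c * (μ G + ε + ε) < μ K := fun E K hKE hK hE => by
    refine (ENNReal.add_lt_add_iff_right hε).1 (hE.trans_le ?_)
    calc μ E ≤ μ (E ∩ K) + μ (E \ K) := measure_le_inter_add_sdiff μ E K
      _ ≤ μ K + ε := add_le_add (measure_mono inter_subset_right) hK.le
  refine ⟨Kp, hKpEp, Km, hKmEm, hKp, hKm, fun Fp Fm hFp hFm => ?_⟩
  have hmiss : (Q \ Fp) \ Fm ⊆ G ∪ (Ep \ Kp) ∪ (Em \ Km) := by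
    rintro x ⟨⟨hxQ, hxp⟩, hxm⟩
    rcases hQ hxQ with (hx | hx) | hx
    exacts [Or.inl (Or.inr ⟨hx, fun h => hxp (hFp h)⟩), Or.inr ⟨hx, fun h => hxm (hFm h)⟩,
      Or.inl (Or.inl hx)]
  calc c * μ ((Q \ Fp) \ Fm) ≤ c * (μ G + ε + ε) := by
        gcongr
        exact (measure_mono hmiss).trans <| (measure_union_le _ _).trans <|
          add_le_add ((measure_union_le _ _).trans (add_le_add_right hKpε.le _)) hKmε.le
    _ < min (μ Kp) (μ Km) := lt_min (hcore Ep Kp hKpEp hKpε (hεG.trans_le (min_le_left _ _)))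
        (hcore Em Km hKmEm hKmε (hεG.trans_le (min_le_right _ _)))
    _ ≤ min (μ Fp) (μ Fm) := min_le_min (measure_mono hFp) (measure_mono hFm)

end CompactCores

lemma exists_cthickening_subset_open_forall_lt_dist {X : Type*} [MetricSpace X]
    [ProperSpace X] {A B U : Set X} (hA : IsCompact A) (hB : IsCompact B) (hU : IsOpen U)
    (hAU : A ⊆ U) (hBU : B ⊆ U) (hAB : Disjoint A B) :
    ∃ δ > 0, ∃ r > 0, cthickening δ A ⊆ U ∧ cthickening δ B ⊆ U ∧
      ∀ x ∈ cthickening δ A, ∀ y ∈ cthickening δ B, r < dist x y := by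
  obtain ⟨δ₁, hδ₁, hdisj⟩ := hAB.exists_cthickenings hA hB.isClosed
  obtain ⟨δ₂, hδ₂, hA₂⟩ := hA.exists_cthickening_subset_open hU hAU
  obtain ⟨δ₃, hδ₃, hB₃⟩ := hB.exists_cthickening_subset_open hU hBU
  set δ := min δ₁ (min δ₂ δ₃)
  have hδ : 0 < δ := lt_min hδ₁ (lt_min hδ₂ hδ₃)
  obtain ⟨r, hr, hsep⟩ := exists_pos_forall_lt_edist hA.cthickening isClosed_cthickening
    (hdisj.mono (cthickening_mono (min_le_left _ _) A) (cthickening_mono (min_le_left _ _) B))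
  refine ⟨δ, hδ, r, hr, (cthickening_mono ?_ A).trans hA₂, (cthickening_mono ?_ B).trans hB₃,
    fun x hx y hy => ?_⟩
  · exact (min_le_right _ _).trans (min_le_left _ _)
  · exact (min_le_right _ _).trans (min_le_right _ _)
  · have := hsep x hx y hy
    rw [edist_nndist, ENNReal.coe_lt_coe] at this
    exact_mod_cast this

section UnitCube

variable {d : ℕ}

lemma volume_cube_zero_one : volume (cube (0 : Fin d → ℝ) 1) = 1 := by
  simp [volume_cube]

lemma pi_Ioo_subset_cube_zero_one : (univ.pi fun _ => Ioo 0 1) ⊆ cube (0 : Fin d → ℝ) 1 := by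
  rw [cube_zero_one]
  exact pi_mono fun _ _ => Ioo_subset_Icc_self

lemma exists_isCompact_subset_pi_Ioo_mul_volume_sdiff_lt {τ : ℝ} {Ep Em G : Set (Fin d → ℝ)}
    (hEp : MeasurableSet Ep) (hEm : MeasurableSet Em) (hQ : cube 0 1 = Ep ∪ Em ∪ G)
    (hlt : ENNReal.ofReal τ * volume G < min (volume Ep) (volume Em)) :
    ∃ Kp ⊆ Ep, ∃ Km ⊆ Em, IsCompact Kp ∧ IsCompact Km ∧
      Kp ⊆ univ.pi (fun _ => Ioo 0 1) ∧ Km ⊆ univ.pi (fun _ => Ioo 0 1) ∧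
      ∀ Fp Fm : Set (Fin d → ℝ), Kp ⊆ Fp → Km ⊆ Fm →
        ENNReal.ofReal τ * volume ((cube 0 1 \ Fp) \ Fm) < min (volume Fp) (volume Fm) := by
  set U : Set (Fin d → ℝ) := univ.pi fun _ => Ioo 0 1
  have hU : MeasurableSet U := MeasurableSet.univ_pi fun _ => measurableSet_Ioo
  have hnull : volume (cube 0 1 \ U) = 0 := by
    rw [measure_sdiff pi_Ioo_subset_cube_zero_one hU.nullMeasurableSet
      (by simp [volume_pi_pi]), volume_cube_zero_one]
    simp [volume_pi_pi]
  have hEpQ : Ep ⊆ cube 0 1 := hQ ▸ subset_union_left.trans subset_union_left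
  have hEmQ : Em ⊆ cube 0 1 := hQ ▸ subset_union_right.trans subset_union_left
  have hvol : ∀ E ⊆ cube 0 1, volume (E ∩ U) = volume E := fun E hE =>
    measure_inter_conull' (measure_mono_null (sdiff_subset_sdiff_left hE) hnull)
  have hfin : ∀ E ⊆ cube 0 1, volume (E ∩ U) ≠ ∞ := fun E hE => by
    rw [hvol E hE]
    exact ((measure_mono hE).trans_lt (by simp [volume_cube_zero_one])).ne
  have hcover : cube 0 1 ⊆ Ep ∩ U ∪ Em ∩ U ∪ (G ∪ (cube 0 1 \ U)) := by
    intro x hx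
    by_cases hxU : x ∈ U
    · rcases hQ ▸ hx with (h | h) | h
      exacts [Or.inl (Or.inl ⟨h, hxU⟩), Or.inl (Or.inr ⟨h, hxU⟩), Or.inr (Or.inl h)]
    · exact Or.inr (Or.inr ⟨hx, hxU⟩)
  have hlt' : ENNReal.ofReal τ * volume (G ∪ (cube 0 1 \ U)) <
      min (volume (Ep ∩ U)) (volume (Em ∩ U)) := by
    rw [hvol Ep hEpQ, hvol Em hEmQ]
    refine lt_of_le_of_lt ?_ hlt
    gcongr ENNReal.ofReal τ * ?_
    exact (measure_union_le _ _).trans_eq (by rw [hnull, add_zero])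
  obtain ⟨Kp, hKp, Km, hKm, hKpc, hKmc, hmass⟩ := exists_isCompact_mul_measure_sdiff_lt
    ENNReal.ofReal_ne_top (hEp.inter hU) (hEm.inter hU) (hfin Ep hEpQ) (hfin Em hEmQ) hcover hlt'
  exact ⟨Kp, hKp.trans inter_subset_left, Km, hKm.trans inter_subset_left, hKpc, hKmc,
    hKp.trans inter_subset_right, hKm.trans inter_subset_right, hmass⟩

lemma exists_separated_dyadic_approx {τ : ℝ} {Ep Em G : Set (Fin d → ℝ)}
    (hEp : MeasurableSet Ep) (hEm : MeasurableSet Em) (hpm : Disjoint Ep Em)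
    (hQ : cube 0 1 = Ep ∪ Em ∪ G)
    (hlt : ENNReal.ofReal τ * volume G < min (volume Ep) (volume Em)) :
    ∃ r > 0, ∀ η > 0, ∃ Fp Fm,
      FiniteUnionOfDyadicCubesIn Fp (cube 0 1) ∧ FiniteUnionOfDyadicCubesIn Fm (cube 0 1) ∧
      (∀ x ∈ Fp, ∀ y ∈ Fm, r < dist x y) ∧
      ENNReal.ofReal τ * volume ((cube 0 1 \ Fp) \ Fm) < min (volume Fp) (volume Fm) ∧
      volume (Fp \ Ep) < η ∧ volume (Fm \ Em) < η := by
  -- The cores lie in the open cube, so fine enough dyadic covers of them stay in `cube 0 1`.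
  obtain ⟨Kp, hKp, Km, hKm, hKpc, hKmc, hKpU, hKmU, hmass⟩ :=
    exists_isCompact_subset_pi_Ioo_mul_volume_sdiff_lt hEp hEm hQ hlt
  obtain ⟨δ, hδ, r, hr, hKpδ, hKmδ, hsep⟩ := exists_cthickening_subset_open_forall_lt_dist
    hKpc hKmc (isOpen_set_pi finite_univ fun _ _ => isOpen_Ioo) hKpU hKmU (hpm.mono hKp hKm)
  refine ⟨r, hr, fun η hη => ?_⟩
  obtain ⟨Fp, hFp, hKpFp, hFpδ, hFpη⟩ := exists_dyadic_approx hKpc hδ hη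
  obtain ⟨Fm, hFm, hKmFm, hFmδ, hFmη⟩ := exists_dyadic_approx hKmc hδ hη
  exact ⟨Fp, Fm, hFp.of_subset (hFpδ.trans (hKpδ.trans pi_Ioo_subset_cube_zero_one)),
    hFm.of_subset (hFmδ.trans (hKmδ.trans pi_Ioo_subset_cube_zero_one)),
    fun x hx y hy => hsep x (hFpδ hx) y (hFmδ hy), hmass Fp Fm hKpFp hKmFm,
    (measure_mono (sdiff_subset_sdiff_right hKp)).trans_lt hFpη,
    (measure_mono (sdiff_subset_sdiff_right hKm)).trans_lt hFmη⟩

lemma exists_subseq_tendsto_of_cube_subset (hd : 0 < d) {r : ℝ} (hr : 0 ≤ r)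
    {b : ℕ → Fin d → ℝ} {ρ : ℕ → ℝ} (hρ : ∀ k, r ≤ ρ k) (hsub : ∀ k, cube (b k) (ρ k) ⊆ cube 0 1) :
    ∃ b₀ ρ₀, r ≤ ρ₀ ∧ cube b₀ ρ₀ ⊆ cube 0 1 ∧ ∃ φ : ℕ → ℕ, StrictMono φ ∧
      Tendsto (b ∘ φ) atTop (𝓝 b₀) ∧ Tendsto (ρ ∘ φ) atTop (𝓝 ρ₀) := by
  set P : Set ((Fin d → ℝ) × ℝ) := {p | r ≤ p.2 ∧ ∀ i, 0 ≤ p.1 i ∧ p.1 i + p.2 ≤ 1}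
  have hmem : ∀ {p : (Fin d → ℝ) × ℝ}, r ≤ p.2 → (p ∈ P ↔ cube p.1 p.2 ⊆ cube 0 1) :=
    fun {p} hp => by simp [P, hp, cube_subset_cube_iff (hr.trans hp)]
  have hP : IsCompact P := by
    refine ((isCompact_univ_pi fun _ => isCompact_Icc).prod isCompact_Icc).of_isClosed_subset
      ?_ (s := (univ.pi fun _ => Icc 0 1) ×ˢ Icc r 1) ?_
    · simp only [P, ofPred_and, ofPred_forall]
      exact (isClosed_le continuous_const continuous_snd).inter <| isClosed_iInter fun i =>
        (isClosed_le continuous_const ((continuous_apply i).comp continuous_fst)).inter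
          (isClosed_le (((continuous_apply i).comp continuous_fst).add continuous_snd)
            continuous_const)
    · rintro ⟨b, ρ⟩ ⟨hρ, h⟩
      have i₀ : Fin d := ⟨0, hd⟩
      exact ⟨fun i _ => ⟨(h i).1, by linarith [h i]⟩, hρ, by linarith [h i₀]⟩
  obtain ⟨⟨b₀, ρ₀⟩, hp₀, φ, hφ, hlim⟩ :=
    hP.tendsto_subseq (x := fun k => (b k, ρ k)) fun k => (hmem (hρ k)).2 (hsub k)
  exact ⟨b₀, ρ₀, hp₀.1, (hmem hp₀.1).1 hp₀, φ, hφ, (continuous_fst.tendsto _).comp hlim,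
    (continuous_snd.tendsto _).comp hlim⟩

lemma tendsto_volume_pi_Icc_inter_nhdsGT {K : Set (Fin d → ℝ)} (hK : MeasurableSet K)
    (hK' : volume K ≠ ∞) (b : Fin d → ℝ) (ρ : ℝ) :
    Tendsto (fun ε => volume ((univ.pi fun i => Icc (b i - ε) (b i + ρ + ε)) ∩ K)) (𝓝[>] 0)
      (𝓝 (volume (cube b ρ ∩ K))) := by
  have hcap : ⋂ ε > 0, (univ.pi fun i => Icc (b i - ε) (b i + ρ + ε)) ∩ K = cube b ρ ∩ K := by
    ext x
    simp only [cube, mem_iInter, mem_inter_iff, mem_univ_pi, mem_Icc]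
    constructor
    · intro hx
      refine ⟨fun i => ⟨le_of_forall_pos_le_add fun ε hε => ?_,
        le_of_forall_pos_le_add fun ε hε => (hx ε hε).1 i |>.2⟩, (hx 1 one_pos).2⟩
      linarith [((hx ε hε).1 i).1]
    · rintro ⟨hx, hxK⟩ ε hε
      exact ⟨fun i => ⟨by linarith [hx i], by linarith [hx i]⟩, hxK⟩
  rw [← hcap]
  refine tendsto_measure_biInter_gt (fun ε _ => ?_) (fun i j _ hij => ?_)
    ⟨1, one_pos, ((measure_mono inter_subset_right).trans_lt hK'.lt_top).ne⟩
  · exact ((MeasurableSet.univ_pi fun _ => measurableSet_Icc).inter hK).nullMeasurableSet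
  · exact inter_subset_inter_left K (pi_mono fun _ _ => Icc_subset_Icc (by linarith)
      (by linarith))

/-- Upper semicontinuity of `(b, ρ) ↦ λ(cube b ρ ∩ K)`, perturbed by sets `F k` that shrink to
`K` in measure. -/
lemma le_volume_cube_inter_of_tendsto {α : Type*} {l : Filter α} [l.NeBot]
    {K : Set (Fin d → ℝ)} (hK : MeasurableSet K) (hK' : volume K ≠ ∞)
    {b : α → Fin d → ℝ} {ρ : α → ℝ} {b₀ : Fin d → ℝ} {ρ₀ : ℝ}
    (hb : Tendsto b l (𝓝 b₀)) (hρ : Tendsto ρ l (𝓝 ρ₀)) {F : α → Set (Fin d → ℝ)}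
    (hF : Tendsto (fun k => volume (F k \ K)) l (𝓝 0)) {c : ℝ≥0∞} (hc : c ≠ ∞)
    (h : ∀ k, c * volume (cube (b k) (ρ k)) ≤ volume (cube (b k) (ρ k) ∩ F k)) :
    c * volume (cube b₀ ρ₀) ≤ volume (cube b₀ ρ₀ ∩ K) := by
  have h' : ∀ k, c * volume (cube (b k) (ρ k)) ≤
      volume (cube (b k) (ρ k) ∩ K) + volume (F k \ K) := fun k =>
    (h k).trans <| (measure_le_inter_add_sdiff _ _ K).trans <| add_le_add
      (measure_mono (inter_subset_inter_left K inter_subset_left))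
      (measure_mono (sdiff_subset_sdiff_left inter_subset_right))
  set box : ℝ → Set (Fin d → ℝ) := fun ε => univ.pi fun i => Icc (b₀ i - ε) (b₀ i + ρ₀ + ε)
  have hvol : Tendsto (fun k => c * volume (cube (b k) (ρ k))) l
      (𝓝 (c * volume (cube b₀ ρ₀))) := by
    simp only [volume_cube]
    exact ENNReal.Tendsto.const_mul
      (ENNReal.Tendsto.pow ((ENNReal.continuous_ofReal.tendsto _).comp hρ)) (Or.inr hc)
  have hbox : ∀ ε > 0, c * volume (cube b₀ ρ₀) ≤ volume (box ε ∩ K) := fun ε hε => by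
    have hsub : ∀ᶠ k in l, cube (b k) (ρ k) ⊆ box ε := by
      have hbi := tendsto_pi_nhds.1 hb
      filter_upwards [eventually_all.2 fun i => ((hbi i).eventually_const_lt
        (show b₀ i - ε < b₀ i by linarith)).and (((hbi i).add hρ).eventually_lt_const
        (show b₀ i + ρ₀ < b₀ i + ρ₀ + ε by linarith))] with k hk
      exact pi_mono fun i _ => Icc_subset_Icc (hk i).1.le (hk i).2.le
    refine le_of_tendsto_of_tendsto hvol (by simpa using tendsto_const_nhds.add hF) ?_
    filter_upwards [hsub] with k hk
    refine (h' k).trans ?_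
    gcongr
  exact ge_of_tendsto (tendsto_volume_pi_Icc_inter_nhdsGT hK hK' b₀ ρ₀)
    (eventually_nhdsWithin_of_forall hbox)

lemma le_of_forall_lt_dist_of_mul_volume_le {b : Fin d → ℝ} {ρ r s : ℝ} (hs : 0 < s)
    (hρ : 0 < ρ) {A B : Set (Fin d → ℝ)} (hAB : ∀ x ∈ A, ∀ y ∈ B, r < dist x y)
    (h : ENNReal.ofReal s * volume (cube b ρ) ≤
      min (volume (cube b ρ ∩ A)) (volume (cube b ρ ∩ B))) : r ≤ ρ := by
  have hne : ∀ F, ENNReal.ofReal s * volume (cube b ρ) ≤ volume (cube b ρ ∩ F) →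
      (cube b ρ ∩ F).Nonempty := fun F hF => nonempty_of_measure_ne_zero <|
    ((ENNReal.mul_pos (by simpa using hs) (by simp [volume_cube, hρ])).trans_le hF).ne'
  obtain ⟨x, hxW, hx⟩ := hne A (h.trans (min_le_left _ _))
  obtain ⟨y, hyW, hy⟩ := hne B (h.trans (min_le_right _ _))
  exact (hAB x hx y hy).le.trans (dist_le_of_mem_cube hρ.le hxW hyW)

lemma isJSSet_cube_zero_one (hd : 0 < d) {τ s : ℝ} (hs : 0 < s)
    (hyp : ∀ Fp Fm : Set (Fin d → ℝ), Disjoint Fp Fm →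
      FiniteUnionOfDyadicCubesIn Fp (cube 0 1) → FiniteUnionOfDyadicCubesIn Fm (cube 0 1) →
      ENNReal.ofReal τ * volume ((cube 0 1 \ Fp) \ Fm) < min (volume Fp) (volume Fm) →
      ∃ W : Set (Fin d → ℝ), IsCube W ∧ W ⊆ cube 0 1 ∧
        ENNReal.ofReal s * volume W ≤ min (volume (W ∩ Fp)) (volume (W ∩ Fm))) :
    IsJSSet (volume : Measure (Fin d → ℝ)) {C | IsCube C} τ s (cube 0 1) := by
  intro Ep Em G hEp hEm _ hpm _ _ hQ hlt
  obtain ⟨r, hr, happrox⟩ := exists_separated_dyadic_approx hEp hEm hpm hQ hlt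
  choose Fp Fm hFp hFm hsep hmass hFpEp hFmEm using
    fun k : ℕ => happrox (k : ℝ≥0∞)⁻¹ (ENNReal.inv_pos.2 (natCast_ne_top k))
  have hW : ∀ k, ∃ b ρ, r ≤ ρ ∧ cube b ρ ⊆ cube 0 1 ∧ ENNReal.ofReal s * volume (cube b ρ) ≤
      min (volume (cube b ρ ∩ Fp k)) (volume (cube b ρ ∩ Fm k)) := by
    intro k
    obtain ⟨_, ⟨b, ρ, hρ, rfl⟩, hWQ, hWs⟩ := hyp (Fp k) (Fm k)
      (disjoint_left.2 fun x hx hx' => by simpa using hr.trans (hsep k x hx x hx'))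
      (hFp k) (hFm k) (hmass k)
    exact ⟨b, ρ, le_of_forall_lt_dist_of_mul_volume_le hs hρ (hsep k) hWs, hWQ, hWs⟩
  choose b ρ hrρ hWQ hWs using hW
  obtain ⟨b₀, ρ₀, hrρ₀, hW₀Q, φ, hφ, hb, hρ⟩ :=
    exists_subseq_tendsto_of_cube_subset hd hr.le hrρ hWQ
  have hu : ∀ (E : Set (Fin d → ℝ)) (F : ℕ → Set (Fin d → ℝ)),
      (∀ k, volume (F k \ E) < (k : ℝ≥0∞)⁻¹) →
      Tendsto (fun k => volume (F (φ k) \ E)) atTop (𝓝 0) := fun E F hFE =>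
    tendsto_of_tendsto_of_tendsto_of_le_of_le tendsto_const_nhds
      (ENNReal.tendsto_inv_nat_nhds_zero.comp hφ.tendsto_atTop) (fun _ => bot_le)
      fun k => (hFE (φ k)).le
  have hQ' : volume (cube (0 : Fin d → ℝ) 1) ≠ ∞ := by simp [volume_cube_zero_one]
  have hEp' := measure_ne_top_of_subset (hQ ▸ subset_union_left.trans subset_union_left) hQ'
  have hEm' := measure_ne_top_of_subset (hQ ▸ subset_union_right.trans subset_union_left) hQ'
  refine ⟨cube b₀ ρ₀, isCube_cube b₀ (hr.trans_le hrρ₀), hW₀Q, le_min ?_ ?_⟩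
  · exact le_volume_cube_inter_of_tendsto hEp hEp' hb hρ (hu Ep Fp hFpEp) ofReal_ne_top
      fun k => (hWs (φ k)).trans (min_le_left _ _)
  · exact le_volume_cube_inter_of_tendsto hEm hEm' hb hρ (hu Em Fm hFmEm) ofReal_ne_top
      fun k => (hWs (φ k)).trans (min_le_right _ _)

end UnitCube

theorem stmt18 {d : ℕ} (hd : 0 < d) (τ s : ℝ)
    (hτ : τ ∈ Set.Ioo (0:ℝ) (1/2)) (hs : 0 < s)
    (hyp : ∀ Fp Fm : Set (Fin d → ℝ), Disjoint Fp Fm →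
      FiniteUnionOfDyadicCubesIn Fp (Set.univ.pi fun _ : Fin d => Set.Icc (0:ℝ) 1) →
      FiniteUnionOfDyadicCubesIn Fm (Set.univ.pi fun _ : Fin d => Set.Icc (0:ℝ) 1) →
      ENNReal.ofReal τ *
          volume (((Set.univ.pi fun _ : Fin d => Set.Icc (0:ℝ) 1) \ Fp) \ Fm) <
        min (volume Fp) (volume Fm) →
      ∃ W : Set (Fin d → ℝ), IsCube W ∧
        W ⊆ (Set.univ.pi fun _ : Fin d => Set.Icc (0:ℝ) 1) ∧
        ENNReal.ofReal s * volume W ≤ min (volume (W ∩ Fp)) (volume (W ∩ Fm))) :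
    IsJSPair volume {C : Set (Fin d → ℝ) | IsCube C} τ s := by
  rw [← cube_zero_one] at hyp
  refine isJSPair_iff.2 ⟨hτ.1, hs, ?_⟩
  rintro _ ⟨a, r, hr, rfl⟩
  exact isJSSet_cube_of_cube_zero_one (isJSSet_cube_zero_one hd hs hyp) a hr
end

section
/- Let d be a positive integer, τ' ∈ (0,1/2) and s ∈ (0,1/2]. Suppose that for every closed cube Q in ℝ^d and all disjoint compact sets F₊, F₋ ⊆ Q, each a finite union of closed rectangles, such that Q itself is τ'-minimal (with respect to Q, F₊, F₋), there exists a cube W ⊆ Q with min{λ(W ∩ F₊), λ(W ∩ F₋)} ≥ s·λ(W). Then for every closed cube Q in ℝ^d and all disjoint compact sets F₊, F₋ ⊆ Q of positive Lebesgue measure, each a finite union of closed rectangles, satisfying min{λ(F₊), λ(F₋)} ≥ τ'·λ(Q \ F₊ \ F₋), there exists a cube W ⊆ Q with min{λ(W ∩ F₊), λ(W ∩ F₋)} ≥ s·λ(W). -/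
open MeasureTheory Set

/-- A closed rectangle in `ℝ^d`: a cartesian product of `d` bounded closed intervals. -/
def IsClosedRect {d : ℕ} (R : Set (Fin d → ℝ)) : Prop :=
  ∃ a b : Fin d → ℝ, (∀ i, a i ≤ b i) ∧ R = Set.univ.pi fun i => Set.Icc (a i) (b i)

/-- `F` is a finite union of closed rectangles. -/
def FiniteUnionOfClosedRects {d : ℕ} (F : Set (Fin d → ℝ)) : Prop :=
  ∃ 𝒮 : Set (Set (Fin d → ℝ)), 𝒮.Finite ∧ (∀ R ∈ 𝒮, IsClosedRect R) ∧ F = ⋃₀ 𝒮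

/-- `V` is an exceptional subcube (relative to `Fp`, `Fm`):
both intersections have positive measure and `V \ Fp \ Fm` is null. -/
def IsExceptional {d : ℕ} (Fp Fm V : Set (Fin d → ℝ)) : Prop :=
  0 < volume (V ∩ Fp) ∧ 0 < volume (V ∩ Fm) ∧ volume ((V \ Fp) \ Fm) = 0

/-- `V` is a good `τ'`-subcube (relative to `Fp`, `Fm`). -/
def IsGoodSubcube {d : ℕ} (τ' : ℝ) (Fp Fm V : Set (Fin d → ℝ)) : Prop :=
  0 < volume (V ∩ Fp) ∧ 0 < volume (V ∩ Fm) ∧ 0 < volume ((V \ Fp) \ Fm) ∧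
  ENNReal.ofReal τ' * volume ((V \ Fp) \ Fm) ≤ min (volume (V ∩ Fp)) (volume (V ∩ Fm))

/-- `V` is `τ'`-minimal (relative to `Fp`, `Fm`): it is a good `τ'`-subcube and
every strictly smaller closed subcube of `V` is neither exceptional nor good. -/
def IsTauMinimal {d : ℕ} (τ' : ℝ) (Fp Fm V : Set (Fin d → ℝ)) : Prop :=
  IsGoodSubcube τ' Fp Fm V ∧
  ∀ V' : Set (Fin d → ℝ), IsCube V' → V' ⊂ V →
    ¬ IsExceptional Fp Fm V' ∧ ¬ IsGoodSubcube τ' Fp Fm V'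

/-! Among the subcubes of `Q` that meet both `Fp` and `Fm` and satisfy the `τ'`-inequality (`Q`
is one of them), take one, `V₀`, of least side length: it exists by compactness, because
`λ(V ∩ S)` depends continuously on the corner and side of the cube `V` (cube boundaries are
null). A cube is connected and `Fp`, `Fm` are closed and disjoint, so no cube is covered a.e. by
`Fp ∪ Fm` unless it lies in one of them; hence no subcube is exceptional and `V₀` is good.
By minimality `V₀` is `τ'`-minimal for `Fp ∩ V₀`, `Fm ∩ V₀`, and the hypothesis applied to `V₀`
gives the cube `W`. -/

open Topology

variable {d : ℕ}

lemma IsPreconnected.subset_or_subset_of_isClosed {X : Type*} [TopologicalSpace X]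
    {s u v : Set X} (hu : IsClosed u) (hv : IsClosed v) (huv : Disjoint u v)
    (hsuv : s ⊆ u ∪ v) (hs : IsPreconnected s) : s ⊆ u ∨ s ⊆ v := by
  by_contra! h
  obtain ⟨⟨x, hxs, hxu⟩, ⟨y, hys, hyv⟩⟩ := And.imp not_subset.1 not_subset.1 h
  have hxv : x ∈ v := (hsuv hxs).resolve_left hxu
  have hyu : y ∈ u := (hsuv hys).resolve_right hyv
  obtain ⟨z, -, hzu, hzv⟩ :=
    isPreconnected_closed_iff.1 hs u v hu hv hsuv ⟨y, hys, hyu⟩ ⟨x, hxs, hxv⟩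
  exact huv.ne_of_mem hzu hzv rfl

lemma inter_inter_of_subset {α : Type*} {V V₀ : Set α} (F : Set α) (hV : V ⊆ V₀) :
    V ∩ (F ∩ V₀) = V ∩ F := by
  rw [← inter_assoc, inter_eq_left.2 (inter_subset_left.trans hV)]

lemma sdiff_inter_sdiff_inter_of_subset {α : Type*} {V V₀ : Set α} (Fp Fm : Set α)
    (hV : V ⊆ V₀) : (V \ (Fp ∩ V₀)) \ (Fm ∩ V₀) = (V \ Fp) \ Fm := by
  ext x
  have := @hV x
  simp only [mem_sdiff, mem_inter_iff]
  tauto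

def closedCube (a : Fin d → ℝ) (r : ℝ) : Set (Fin d → ℝ) :=
  univ.pi fun i => Icc (a i) (a i + r)

lemma closedCube_eq_Icc (a : Fin d → ℝ) (r : ℝ) :
    closedCube a r = Icc a (a + fun _ => r) :=
  pi_univ_Icc _ _

lemma mem_closedCube {a x : Fin d → ℝ} {r : ℝ} :
    x ∈ closedCube a r ↔ ∀ i, a i ≤ x i ∧ x i ≤ a i + r := by
  simp only [closedCube, mem_univ_pi, mem_Icc]

lemma isCompact_closedCube (a : Fin d → ℝ) (r : ℝ) : IsCompact (closedCube a r) :=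
  isCompact_univ_pi fun _ => isCompact_Icc

lemma isClosed_closedCube (a : Fin d → ℝ) (r : ℝ) : IsClosed (closedCube a r) :=
  (isCompact_closedCube a r).isClosed

lemma convex_closedCube (a : Fin d → ℝ) (r : ℝ) : Convex ℝ (closedCube a r) :=
  convex_pi fun _ _ => convex_Icc _ _

lemma interior_closedCube (a : Fin d → ℝ) (r : ℝ) :
    interior (closedCube a r) = univ.pi fun i => Ioo (a i) (a i + r) := by
  simp only [closedCube, interior_pi_set finite_univ, interior_Icc]

lemma closedCube_subset_closedCube_iff {a b : Fin d → ℝ} {r t : ℝ} (hr : 0 ≤ r) :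
    closedCube a r ⊆ closedCube b t ↔ a ∈ closedCube b (t - r) := by
  refine ⟨fun h => mem_closedCube.2 fun i => ?_, fun h x hx => ?_⟩
  · have ha := mem_closedCube.1 (h (mem_closedCube.2 fun i => ⟨le_rfl, by linarith⟩)) i
    have hfar : (a + fun _ => r) ∈ closedCube a r :=
      mem_closedCube.2 fun i => ⟨by simp [hr], le_rfl⟩
    have hb := mem_closedCube.1 (h hfar) i
    simp only [Pi.add_apply] at hb
    constructor <;> linarith
  · rw [mem_closedCube] at h hx ⊢
    intro i
    constructor <;> linarith [h i, hx i]

lemma closedCube_eq_of_subset_of_le {a b : Fin d → ℝ} {r t : ℝ} (ht : 0 ≤ t)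
    (h : closedCube a r ⊆ closedCube b t) (htr : t ≤ r) : closedCube a r = closedCube b t := by
  have hab := mem_closedCube.1 ((closedCube_subset_closedCube_iff (ht.trans htr)).1 h)
  refine h.antisymm ((closedCube_subset_closedCube_iff ht).2 (mem_closedCube.2 fun i => ?_))
  constructor <;> linarith [hab i]

lemma closedCube_zero_subsingleton (a : Fin d → ℝ) : (closedCube a 0).Subsingleton := by
  intro x hx y hy
  rw [mem_closedCube] at hx hy
  funext i
  linarith [hx i, hy i]

lemma IsCube.subset_or_subset_of_measure_diff_eq_zero {V Fp Fm : Set (Fin d → ℝ)}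
    (hV : IsCube V) (hFp : IsClosed Fp) (hFm : IsClosed Fm) (hdisj : Disjoint Fp Fm)
    (hnull : volume ((V \ Fp) \ Fm) = 0) : V ⊆ Fp ∨ V ⊆ Fm := by
  obtain ⟨a, r, hr, rfl⟩ : ∃ a r, 0 < r ∧ V = closedCube a r := hV
  have hconv := convex_closedCube a r
  -- an open null set is empty, so the interior of the cube is covered by `Fp ∪ Fm`
  have hcover : interior (closedCube a r) ⊆ Fp ∪ Fm := by
    rw [← sdiff_eq_empty, ← (isOpen_interior.sdiff (hFp.union hFm)).measure_eq_zero_iff volume]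
    refine measure_mono_null (fun x hx => ?_) hnull
    simp only [mem_sdiff, mem_union, not_or] at hx ⊢
    exact ⟨⟨interior_subset hx.1, hx.2.1⟩, hx.2.2⟩
  have hint : (interior (closedCube a r)).Nonempty := by
    rw [interior_closedCube]
    exact univ_pi_nonempty_iff.2 fun i => nonempty_Ioo.2 (by linarith)
  have hclosure : closure (interior (closedCube a r)) = closedCube a r := by
    rw [hconv.closure_interior_eq_closure_of_nonempty_interior hint,
      (isClosed_closedCube a r).closure_eq]
  rw [← hclosure]
  exact (hconv.interior.isPreconnected.subset_or_subset_of_isClosed hFp hFm hdisj hcover).imp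
    (closure_minimal · hFp) (closure_minimal · hFm)

lemma IsCube.not_isExceptional {V Fp Fm : Set (Fin d → ℝ)} (hV : IsCube V)
    (hFp : IsClosed Fp) (hFm : IsClosed Fm) (hdisj : Disjoint Fp Fm) :
    ¬ IsExceptional Fp Fm V := by
  rintro ⟨hp, hm, hnull⟩
  rcases hV.subset_or_subset_of_measure_diff_eq_zero hFp hFm hdisj hnull with h | h
  · simp [(hdisj.mono_left h).inter_eq] at hm
  · simp [(hdisj.mono_right h).symm.inter_eq] at hp

/-- Unlike `IsGoodSubcube`, this is a closed condition on the corner and side length of `V`, so a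
good subcube of least side can be found by compactness. -/
def IsWeaklyGood (τ' : ℝ) (Fp Fm V : Set (Fin d → ℝ)) : Prop :=
  (V ∩ Fp).Nonempty ∧ (V ∩ Fm).Nonempty ∧
  ENNReal.ofReal τ' * volume ((V \ Fp) \ Fm) ≤ min (volume (V ∩ Fp)) (volume (V ∩ Fm))

lemma IsGoodSubcube.isWeaklyGood {τ' : ℝ} {Fp Fm V : Set (Fin d → ℝ)}
    (h : IsGoodSubcube τ' Fp Fm V) : IsWeaklyGood τ' Fp Fm V :=
  ⟨nonempty_of_measure_ne_zero h.1.ne', nonempty_of_measure_ne_zero h.2.1.ne', h.2.2.2⟩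

lemma IsWeaklyGood.isGoodSubcube {τ' : ℝ} {Fp Fm V : Set (Fin d → ℝ)}
    (h : IsWeaklyGood τ' Fp Fm V) (hτ : 0 < τ') (hV : IsCube V) (hFp : IsClosed Fp)
    (hFm : IsClosed Fm) (hdisj : Disjoint Fp Fm) : IsGoodSubcube τ' Fp Fm V := by
  obtain ⟨⟨x, hxV, hxp⟩, ⟨y, hyV, hym⟩, hineq⟩ := h
  have hrest : 0 < volume ((V \ Fp) \ Fm) := by
    refine pos_iff_ne_zero.2 fun hnull => ?_
    rcases hV.subset_or_subset_of_measure_diff_eq_zero hFp hFm hdisj hnull with hsub | hsub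
    · exact hdisj.ne_of_mem (hsub hyV) hym rfl
    · exact hdisj.ne_of_mem hxp (hsub hxV) rfl
  have hlow : 0 < ENNReal.ofReal τ' * volume ((V \ Fp) \ Fm) :=
    ENNReal.mul_pos (ENNReal.ofReal_pos.2 hτ).ne' hrest.ne'
  exact ⟨hlow.trans_le (hineq.trans (min_le_left _ _)),
    hlow.trans_le (hineq.trans (min_le_right _ _)), hrest, hineq⟩

lemma IsWeaklyGood.side_pos {τ' r : ℝ} {Fp Fm : Set (Fin d → ℝ)} {a : Fin d → ℝ}
    (h : IsWeaklyGood τ' Fp Fm (closedCube a r)) (hr : 0 ≤ r) (hdisj : Disjoint Fp Fm) :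
    0 < r := by
  refine hr.lt_of_ne fun hr0 => ?_
  obtain ⟨⟨x, hxV, hxp⟩, ⟨y, hyV, hym⟩, -⟩ := h
  subst hr0
  exact hdisj.ne_of_mem hxp hym (closedCube_zero_subsingleton a hxV hyV)

lemma isGoodSubcube_inter_iff {τ' : ℝ} {Fp Fm V V₀ : Set (Fin d → ℝ)} (hV : V ⊆ V₀) :
    IsGoodSubcube τ' (Fp ∩ V₀) (Fm ∩ V₀) V ↔ IsGoodSubcube τ' Fp Fm V := by
  simp only [IsGoodSubcube, inter_inter_of_subset _ hV, sdiff_inter_sdiff_inter_of_subset _ _ hV]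

lemma eventually_mem_closedCube_iff {x : Fin d → ℝ} {p : (Fin d → ℝ) × ℝ}
    (hx : x ∉ frontier (closedCube p.1 p.2)) :
    ∀ᶠ q in 𝓝 p, x ∈ closedCube q.1 q.2 ↔ x ∈ closedCube p.1 p.2 := by
  have hcorner : ∀ i, Continuous fun q : (Fin d → ℝ) × ℝ => q.1 i := fun i => by fun_prop
  have hfar : ∀ i, Continuous fun q : (Fin d → ℝ) × ℝ => q.1 i + q.2 := fun i => by fun_prop
  rw [frontier, mem_sdiff, not_and_not_right, (isClosed_closedCube _ _).closure_eq] at hx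
  by_cases hxp : x ∈ closedCube p.1 p.2
  · have hint := hx hxp
    rw [interior_closedCube, mem_univ_pi] at hint
    have : ∀ᶠ q in 𝓝 p, ∀ i, q.1 i < x i ∧ x i < q.1 i + q.2 :=
      Filter.eventually_all.2 fun i => ((hcorner i).continuousAt.eventually_lt continuousAt_const
        (hint i).1).and (continuousAt_const.eventually_lt (hfar i).continuousAt (hint i).2)
    filter_upwards [this] with q hq
    simp only [hxp, iff_true, mem_closedCube]
    exact fun i => ⟨(hq i).1.le, (hq i).2.le⟩
  · obtain ⟨i, hi⟩ : ∃ i, x i < p.1 i ∨ p.1 i + p.2 < x i := by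
      simpa [mem_closedCube, imp_iff_not_or] using hxp
    have : ∀ᶠ q in 𝓝 p, x i < q.1 i ∨ q.1 i + q.2 < x i := by
      rcases hi with hi | hi
      · exact (continuousAt_const.eventually_lt (hcorner i).continuousAt hi).mono
          fun _ => Or.inl
      · exact ((hfar i).continuousAt.eventually_lt continuousAt_const hi).mono
          fun _ => Or.inr
    filter_upwards [this] with q hq
    simp only [hxp, iff_false, mem_closedCube, not_forall]
    exact ⟨i, by rcases hq with h | h <;> intro ⟨h1, h2⟩ <;> linarith⟩

lemma continuous_volume_closedCube_inter {S : Set (Fin d → ℝ)} (hS : MeasurableSet S) :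
    Continuous fun p : (Fin d → ℝ) × ℝ => volume (closedCube p.1 p.2 ∩ S) := by
  refine continuous_iff_continuousAt.2 fun p => ?_
  have hbig : ∀ᶠ q in 𝓝 p, closedCube q.1 q.2 ⊆ closedCube (p.1 - 1) (p.2 + 2) := by
    have hnear : ∀ᶠ q in 𝓝 p, ∀ i, p.1 i - 1 < q.1 i ∧ q.1 i + q.2 < p.1 i + p.2 + 1 :=
      Filter.eventually_all.2 fun i =>
        (continuousAt_const.eventually_lt (by fun_prop) (by linarith)).and
          (ContinuousAt.eventually_lt (by fun_prop) continuousAt_const (by linarith))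
    filter_upwards [hnear] with q hq x hx
    rw [mem_closedCube] at hx ⊢
    intro i
    simp only [Pi.sub_apply, Pi.one_apply]
    constructor <;> linarith [hq i, hx i]
  refine tendsto_measure_of_ae_tendsto_indicator (𝓝 p)
    ((isClosed_closedCube _ _).measurableSet.inter hS)
    (fun q => (isClosed_closedCube _ _).measurableSet.inter hS)
    (isClosed_closedCube _ _).measurableSet (isCompact_closedCube _ _).measure_ne_top
    (hbig.mono fun q hq => inter_subset_left.trans hq) ?_
  have hnull : volume (frontier (closedCube p.1 p.2)) = 0 :=
    (convex_closedCube _ _).addHaar_frontier volume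
  filter_upwards [measure_eq_zero_iff_ae_notMem.1 hnull] with x hx
  filter_upwards [eventually_mem_closedCube_iff hx] with q hq
  simp only [mem_inter_iff, hq]

lemma isClosed_setOf_closedCube_inter_nonempty {F : Set (Fin d → ℝ)} (hF : IsCompact F) :
    IsClosed {p : (Fin d → ℝ) × ℝ | (closedCube p.1 p.2 ∩ F).Nonempty} := by
  have : CompactSpace F := isCompact_iff_compactSpace.1 hF
  have hmem : IsClosed {z : ((Fin d → ℝ) × ℝ) × F | (z.2 : Fin d → ℝ) ∈ closedCube z.1.1 z.1.2} := by
    simp only [closedCube_eq_Icc, mem_Icc, ofPred_and]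
    exact (isClosed_le (by fun_prop) (by fun_prop)).inter
      (isClosed_le (by fun_prop) (by fun_prop))
  convert isClosedMap_fst_of_compactSpace _ hmem using 1
  ext p
  simp only [Set.Nonempty, mem_inter_iff, mem_ofPred_eq, mem_image, Prod.exists, Subtype.exists,
    exists_and_right, exists_eq_right]
  exact ⟨fun ⟨x, hxV, hxF⟩ => ⟨x, hxF, hxV⟩, fun ⟨x, hxF, hxV⟩ => ⟨x, hxV, hxF⟩⟩

lemma isClosed_setOf_isWeaklyGood (τ' : ℝ) {Fp Fm : Set (Fin d → ℝ)} (hFp : IsCompact Fp)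
    (hFm : IsCompact Fm) :
    IsClosed {p : (Fin d → ℝ) × ℝ | IsWeaklyGood τ' Fp Fm (closedCube p.1 p.2)} := by
  simp only [IsWeaklyGood, ofPred_and, sdiff_eq, inter_assoc]
  refine (isClosed_setOf_closedCube_inter_nonempty hFp).inter
    ((isClosed_setOf_closedCube_inter_nonempty hFm).inter (isClosed_le ?_ ?_))
  · exact (ENNReal.continuous_const_mul ENNReal.ofReal_ne_top).comp
      (continuous_volume_closedCube_inter
        (hFp.isClosed.measurableSet.compl.inter hFm.isClosed.measurableSet.compl))
  · exact (continuous_volume_closedCube_inter hFp.isClosed.measurableSet).min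
      (continuous_volume_closedCube_inter hFm.isClosed.measurableSet)

lemma isCompact_setOf_closedCube_subset (q : Fin d → ℝ) (r : ℝ) :
    IsCompact {p : (Fin d → ℝ) × ℝ | p.2 ∈ Icc 0 r ∧ p.1 ∈ closedCube q (r - p.2)} := by
  refine ((isCompact_closedCube q r).prod (isCompact_Icc (a := 0) (b := r))).of_isClosed_subset ?_ ?_
  · simp only [closedCube_eq_Icc, mem_Icc, ofPred_and]
    exact ((isClosed_le (by fun_prop) (by fun_prop)).inter
      (isClosed_le (by fun_prop) (by fun_prop))).inter
      ((isClosed_le (by fun_prop) (by fun_prop)).inter (isClosed_le (by fun_prop) (by fun_prop)))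
  · rintro p ⟨hp, ha⟩
    refine ⟨mem_closedCube.2 fun i => ?_, hp⟩
    have := mem_closedCube.1 ha i
    constructor <;> linarith [hp.1]

lemma exists_closedCube_isWeaklyGood_minimal {τ' r : ℝ} {q : Fin d → ℝ}
    {Fp Fm : Set (Fin d → ℝ)} (hFp : IsCompact Fp) (hFm : IsCompact Fm) (hr : 0 ≤ r)
    (hQ : IsWeaklyGood τ' Fp Fm (closedCube q r)) :
    ∃ a σ, 0 ≤ σ ∧ closedCube a σ ⊆ closedCube q r ∧ IsWeaklyGood τ' Fp Fm (closedCube a σ) ∧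
      ∀ a' r', 0 ≤ r' → closedCube a' r' ⊆ closedCube q r →
        IsWeaklyGood τ' Fp Fm (closedCube a' r') → σ ≤ r' := by
  have hK := (isCompact_setOf_closedCube_subset q r).inter_right
    (isClosed_setOf_isWeaklyGood τ' hFp hFm)
  have hQK : (q, r) ∈ {p : (Fin d → ℝ) × ℝ | p.2 ∈ Icc 0 r ∧ p.1 ∈ closedCube q (r - p.2)} ∩
      {p | IsWeaklyGood τ' Fp Fm (closedCube p.1 p.2)} :=
    ⟨⟨⟨hr, le_rfl⟩, (closedCube_subset_closedCube_iff hr).1 subset_rfl⟩, hQ⟩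
  obtain ⟨⟨a, σ⟩, ⟨⟨hσ, ha⟩, hgood⟩, hmin⟩ :=
    hK.exists_isMinOn ⟨_, hQK⟩ continuous_snd.continuousOn
  refine ⟨a, σ, hσ.1, (closedCube_subset_closedCube_iff hσ.1).2 ha, hgood,
    fun a' r' hr' hsub hgood' => le_of_not_gt fun hlt => ?_⟩
  exact (isMinOn_iff.1 hmin (a', r') ⟨⟨⟨hr', hlt.le.trans hσ.2⟩,
    (closedCube_subset_closedCube_iff hr').1 hsub⟩, hgood'⟩).not_gt hlt

theorem exists_isTauMinimal_inter {τ' r : ℝ} {q : Fin d → ℝ} {Fp Fm : Set (Fin d → ℝ)}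
    (hτ : 0 < τ') (hFp : IsCompact Fp) (hFm : IsCompact Fm) (hdisj : Disjoint Fp Fm)
    (hr : 0 ≤ r) (hQ : IsWeaklyGood τ' Fp Fm (closedCube q r)) :
    ∃ a σ, 0 < σ ∧ closedCube a σ ⊆ closedCube q r ∧
      IsTauMinimal τ' (Fp ∩ closedCube a σ) (Fm ∩ closedCube a σ) (closedCube a σ) := by
  obtain ⟨a, σ, hσ, hsub, hgood, hmin⟩ := exists_closedCube_isWeaklyGood_minimal hFp hFm hr hQ
  have hσpos := hgood.side_pos hσ hdisj
  refine ⟨a, σ, hσpos, hsub, (isGoodSubcube_inter_iff subset_rfl).2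
    (hgood.isGoodSubcube hτ ⟨a, σ, hσpos, rfl⟩ hFp.isClosed hFm.isClosed hdisj), ?_⟩
  rintro _ ⟨a', r', hr', rfl⟩ hss
  have hclosed := isClosed_closedCube a σ
  refine ⟨IsCube.not_isExceptional ⟨a', r', hr', rfl⟩ (hFp.isClosed.inter hclosed)
    (hFm.isClosed.inter hclosed) (hdisj.mono inter_subset_left inter_subset_left), fun hg => ?_⟩
  have hle := hmin a' r' hr'.le (hss.subset.trans hsub)
    ((isGoodSubcube_inter_iff hss.subset).1 hg).isWeaklyGood
  exact hss.ne (closedCube_eq_of_subset_of_le hσ hss.subset hle)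

lemma isClosedRect_pi_Icc {b c : Fin d → ℝ} (h : (univ.pi fun i => Icc (b i) (c i)).Nonempty) :
    IsClosedRect (univ.pi fun i => Icc (b i) (c i)) := by
  obtain ⟨x, hx⟩ := h
  exact ⟨b, c, fun i => ((hx i (mem_univ i)).1).trans (hx i (mem_univ i)).2, rfl⟩

lemma IsClosedRect.inter_closedCube {R : Set (Fin d → ℝ)} (hR : IsClosedRect R)
    (a : Fin d → ℝ) (r : ℝ) (hne : (R ∩ closedCube a r).Nonempty) :
    IsClosedRect (R ∩ closedCube a r) := by
  obtain ⟨b, c, -, rfl⟩ := hR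
  rw [closedCube, ← pi_inter_distrib] at hne ⊢
  simp only [Icc_inter_Icc] at hne ⊢
  exact isClosedRect_pi_Icc hne

lemma FiniteUnionOfClosedRects.inter_closedCube {F : Set (Fin d → ℝ)}
    (hF : FiniteUnionOfClosedRects F) (a : Fin d → ℝ) (r : ℝ) :
    FiniteUnionOfClosedRects (F ∩ closedCube a r) := by
  obtain ⟨𝒮, h𝒮, hrect, rfl⟩ := hF
  refine ⟨((· ∩ closedCube a r) '' 𝒮) \ {∅}, (h𝒮.image _).sdiff, ?_, ?_⟩
  · rintro _ ⟨⟨R, hR, rfl⟩, hne⟩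
    exact (hrect R hR).inter_closedCube a r (nonempty_iff_ne_empty.2 hne)
  · rw [sUnion_sdiff_singleton_empty, sUnion_image, sUnion_eq_biUnion, iUnion₂_inter]

theorem stmt19_general {d : ℕ} (τ' s : ℝ)
    (hτ : τ' ∈ Set.Ioo (0:ℝ) (1/2))
    (hyp : ∀ Q Fp Fm : Set (Fin d → ℝ), IsCube Q →
      IsCompact Fp → IsCompact Fm → Fp ⊆ Q → Fm ⊆ Q → Disjoint Fp Fm →
      FiniteUnionOfClosedRects Fp → FiniteUnionOfClosedRects Fm →
      IsTauMinimal τ' Fp Fm Q →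
      ∃ W : Set (Fin d → ℝ), IsCube W ∧ W ⊆ Q ∧
        ENNReal.ofReal s * volume W ≤ min (volume (W ∩ Fp)) (volume (W ∩ Fm))) :
    ∀ Q Fp Fm : Set (Fin d → ℝ), IsCube Q →
      IsCompact Fp → IsCompact Fm → Fp ⊆ Q → Fm ⊆ Q → Disjoint Fp Fm →
      FiniteUnionOfClosedRects Fp → FiniteUnionOfClosedRects Fm →
      0 < volume Fp → 0 < volume Fm →
      ENNReal.ofReal τ' * volume ((Q \ Fp) \ Fm) ≤ min (volume Fp) (volume Fm) →
      ∃ W : Set (Fin d → ℝ), IsCube W ∧ W ⊆ Q ∧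
        ENNReal.ofReal s * volume W ≤ min (volume (W ∩ Fp)) (volume (W ∩ Fm)) := by
  intro Q Fp Fm hQ hFp hFm hFpQ hFmQ hdisj hFpU hFmU hFppos hFmpos hineq
  obtain ⟨q, r, hr, rfl⟩ : ∃ q r, 0 < r ∧ Q = closedCube q r := hQ
  have hQgood : IsWeaklyGood τ' Fp Fm (closedCube q r) := by
    rw [IsWeaklyGood, inter_eq_right.2 hFpQ, inter_eq_right.2 hFmQ]
    exact ⟨nonempty_of_measure_ne_zero hFppos.ne', nonempty_of_measure_ne_zero hFmpos.ne', hineq⟩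
  obtain ⟨a, σ, hσ, hsub, hmin⟩ := exists_isTauMinimal_inter hτ.1 hFp hFm hdisj hr.le hQgood
  have hclosed := isClosed_closedCube a σ
  obtain ⟨W, hW, hWV, hWs⟩ := hyp (closedCube a σ) _ _ ⟨a, σ, hσ, rfl⟩ (hFp.inter_right hclosed)
    (hFm.inter_right hclosed) inter_subset_right inter_subset_right
    (hdisj.mono inter_subset_left inter_subset_left) (hFpU.inter_closedCube a σ)
    (hFmU.inter_closedCube a σ) hmin
  rw [inter_inter_of_subset _ hWV, inter_inter_of_subset _ hWV] at hWs
  exact ⟨W, hW, hWV.trans hsub, hWs⟩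

theorem stmt19 {d : ℕ} (hd : 0 < d) (τ' s : ℝ)
    (hτ : τ' ∈ Set.Ioo (0:ℝ) (1/2)) (hs : s ∈ Set.Ioc (0:ℝ) (1/2))
    (hyp : ∀ Q Fp Fm : Set (Fin d → ℝ), IsCube Q →
      IsCompact Fp → IsCompact Fm → Fp ⊆ Q → Fm ⊆ Q → Disjoint Fp Fm →
      FiniteUnionOfClosedRects Fp → FiniteUnionOfClosedRects Fm →
      IsTauMinimal τ' Fp Fm Q →
      ∃ W : Set (Fin d → ℝ), IsCube W ∧ W ⊆ Q ∧
        ENNReal.ofReal s * volume W ≤ min (volume (W ∩ Fp)) (volume (W ∩ Fm))) :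
    ∀ Q Fp Fm : Set (Fin d → ℝ), IsCube Q →
      IsCompact Fp → IsCompact Fm → Fp ⊆ Q → Fm ⊆ Q → Disjoint Fp Fm →
      FiniteUnionOfClosedRects Fp → FiniteUnionOfClosedRects Fm →
      0 < volume Fp → 0 < volume Fm →
      ENNReal.ofReal τ' * volume ((Q \ Fp) \ Fm) ≤ min (volume Fp) (volume Fm) →
      ∃ W : Set (Fin d → ℝ), IsCube W ∧ W ⊆ Q ∧
        ENNReal.ofReal s * volume W ≤ min (volume (W ∩ Fp)) (volume (W ∩ Fm)) :=
  stmt19_general τ' s hτ hyp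
end
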